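/- Let k ≥ 1, λ, μ ∈ ℂ with 2(μ-λ-k) ∉ {-2k,...,-1,0}. The even-index recurrence (ℓ+1)(ℓ+2(μ-λ-k))C_{2ℓ,3} = -(k-ℓ)(ε(C_{2ℓ-1,1}+C_{2ℓ-1,3}) + (k-ℓ+2λ+1)C_{2ℓ-2,3}) is satisfied by C_{2ℓ,3} = -binom(k,ℓ+1)binom(k+2λ-1,ℓ-1)/binom(-2(μ-λ-k),ℓ+1) together with C_{2ℓ-1,1} = C_{2ℓ-1,3} = ε(k+2λ-ℓ+1)/(ℓ-1) · C_{2ℓ-2,3} for a fixed sign ε ∈ {±1} (assuming denominators are nonzero). -/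

import Mathlib

noncomputable section

open Polynomial

/-- The Grassmann algebra `C^∞(S¹)[ξ₁,ξ₂]` (polynomial model in `x`):
an element `f₀ + ξ₁f₁ + ξ₂f₂ + ξ₁ξ₂f₁₂` is encoded by its four components. -/
abbrev Gr := Polynomial ℂ × Polynomial ℂ × Polynomial ℂ × Polynomial ℂ

namespace Gr

/-- Supercommutative multiplication. -/
def gmul (f g : Gr) : Gr :=
  (f.1 * g.1,
   f.1 * g.2.1 + f.2.1 * g.1,
   f.1 * g.2.2.1 + f.2.2.1 * g.1,
   f.1 * g.2.2.2 + f.2.2.2 * g.1 + f.2.1 * g.2.2.1 - f.2.2.1 * g.2.1)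

/-- The even vector field `∂ₓ`. -/
def dX (f : Gr) : Gr :=
  (derivative f.1, derivative f.2.1, derivative f.2.2.1, derivative f.2.2.2)

/-- The left odd derivation `∂_{ξ₁}`. -/
def dXi1 (f : Gr) : Gr := (f.2.1, 0, f.2.2.2, 0)

/-- The left odd derivation `∂_{ξ₂}`. -/
def dXi2 (f : Gr) : Gr := (f.2.2.1, -f.2.2.2, 0, 0)

def xi1 : Gr := (0, 1, 0, 0)
def xi2 : Gr := (0, 0, 1, 0)
def xi12 : Gr := (0, 0, 0, 1)
def oneG : Gr := (1, 0, 0, 0)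
def xG : Gr := (Polynomial.X, 0, 0, 0)

/-- `D̄₁ = ∂_{ξ₁} - ξ₁∂ₓ`. -/
def D1b (f : Gr) : Gr := dXi1 f - gmul xi1 (dX f)
/-- `D̄₂ = ∂_{ξ₂} - ξ₂∂ₓ`. -/
def D2b (f : Gr) : Gr := dXi2 f - gmul xi2 (dX f)
/-- `D₁ = ∂_{ξ₁} + ξ₁∂ₓ`. -/
def Dp1 (f : Gr) : Gr := dXi1 f + gmul xi1 (dX f)
/-- `D₂ = ∂_{ξ₂} + ξ₂∂ₓ`. -/
def Dp2 (f : Gr) : Gr := dXi2 f + gmul xi2 (dX f)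

/-- `f` is homogeneous of parity `p` (`false` = even, `true` = odd). -/
def IsHom (f : Gr) (p : Bool) : Prop :=
  if p then f.1 = 0 ∧ f.2.2.2 = 0 else f.2.1 = 0 ∧ f.2.2.1 = 0

/-- `(-1)^p`. -/
def sgn (p : Bool) : ℂ := if p then -1 else 1

/-- The contact vector field `X_f = f∂ₓ - (-1)^{p(f)} ½(D̄₁(f)D̄₁ + D̄₂(f)D̄₂)`. -/
def Xv (f : Gr) (p : Bool) (F : Gr) : Gr :=
  gmul f (dX F) - (sgn p * (1/2 : ℂ)) • (gmul (D1b f) (D1b F) + gmul (D2b f) (D2b F))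

/-- The Lie derivative `L^λ_{X_f} = X_f + λ f′` on λ-densities. -/
def L (lam : ℂ) (f : Gr) (p : Bool) (F : Gr) : Gr :=
  Xv f p F + lam • gmul (dX f) F

/-- The contact bracket `{f,g} = fg' - f'g - (-1)^{p(f)} ½(D̄₁(f)D̄₁(g) + D̄₂(f)D̄₂(g))`. -/
def cbr (f : Gr) (p : Bool) (g : Gr) : Gr :=
  gmul f (dX g) - gmul (dX f) g
    - (sgn p * (1/2 : ℂ)) • (gmul (D1b f) (D1b g) + gmul (D2b f) (D2b g))

/-- Generalized binomial coefficient `z(z-1)⋯(z-m+1)/m!`. -/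
noncomputable def cbinom (z : ℂ) (m : ℕ) : ℂ :=
  (∏ i ∈ Finset.range m, (z - i)) / (Nat.factorial m)


/-- `C_{2ℓ,3} = -binom(k,ℓ+1)·binom(k+2λ-1,ℓ-1)/binom(-2(μ-λ-k),ℓ+1)`. -/
noncomputable def C3f (k : ℕ) (lam mu : ℂ) (ℓ : ℕ) : ℂ :=
  -(cbinom (k : ℂ) (ℓ+1) * cbinom ((k : ℂ) + 2*lam - 1) (ℓ-1))
    / cbinom (-2*(mu - lam - (k : ℂ))) (ℓ+1)

/-- `C_{2ℓ-1,1} = C_{2ℓ-1,3} = ε(k+2λ-ℓ+1)/(ℓ-1) · C_{2ℓ-2,3}`. -/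
noncomputable def Cm13 (k : ℕ) (lam mu ε : ℂ) (ℓ : ℕ) : ℂ :=
  ε * ((k : ℂ) + 2*lam - (ℓ : ℂ) + 1) / ((ℓ : ℂ) - 1) * C3f k lam mu (ℓ-1)

/-! With `B = -2(μ-λ-k)`, the rule `binom(z,m+1) = binom(z,m)(z-m)/(m+1)` applied to the three
binomials gives `(ℓ-1)(ℓ-B) C_{2ℓ,3} = -(k-ℓ)(k+2λ-ℓ+1) C_{2ℓ-2,3}`. Since `ε² = 1`, the odd
coefficients contribute `2(k+2λ-ℓ+1)/(ℓ-1) · C_{2ℓ-2,3}`, and `2/(ℓ-1) + 1 = (ℓ+1)/(ℓ-1)` reduces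
the recurrence to that identity multiplied by `(ℓ+1)/(ℓ-1)`. -/

lemma cbinom_succ (z : ℂ) (m : ℕ) :
    cbinom z (m + 1) = cbinom z m * (z - m) / (m + 1) := by
  rw [cbinom, cbinom, Finset.prod_range_succ, Nat.factorial_succ]
  push_cast
  rw [div_mul_eq_mul_div, div_div, mul_comm (m.factorial : ℂ)]

lemma sub_ne_zero_of_cbinom_succ_ne_zero {z : ℂ} {m : ℕ} (h : cbinom z (m + 1) ≠ 0) :
    z - m ≠ 0 := by
  intro hz
  exact h (by rw [cbinom_succ, hz, mul_zero, zero_div])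

lemma C3f_step (k : ℕ) (lam mu : ℂ) {ℓ : ℕ} (hℓ : 2 ≤ ℓ)
    (hB : -2 * (mu - lam - (k : ℂ)) - ℓ ≠ 0) :
    ((ℓ : ℂ) - 1) * ((ℓ : ℂ) + 2 * (mu - lam - (k : ℂ))) * C3f k lam mu ℓ
      = -((k : ℂ) - ℓ) * ((k : ℂ) + 2 * lam - ℓ + 1) * C3f k lam mu (ℓ - 1) := by
  obtain ⟨n, rfl⟩ := Nat.exists_eq_add_of_le' hℓ
  have hgap : ((n + 2 : ℕ) : ℂ) + 2 * (mu - lam - (k : ℂ))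
      = -(-2 * (mu - lam - (k : ℂ)) - (n + 2 : ℕ)) := by
    ring
  simp only [C3f, Nat.add_sub_cancel, Nat.add_succ_sub_one, hgap]
  rw [cbinom_succ (k : ℂ) (n + 2), cbinom_succ _ n, cbinom_succ _ (n + 2)]
  generalize -2 * (mu - lam - (k : ℂ)) = B at hB ⊢
  by_cases hc : cbinom B (n + 2) = 0
  · -- both sides are junk zeros: the denominators contain `cbinom B (n + 2)`
    simp [hc]
  · have hn : (n : ℂ) + 1 ≠ 0 := Nat.cast_add_one_ne_zero n
    have hn3 : ((n + 2 : ℕ) : ℂ) + 1 ≠ 0 := Nat.cast_add_one_ne_zero (n + 2)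
    push_cast at hB hn3 ⊢
    field_simp
    ring

theorem stmt14_general (k : ℕ) (lam mu : ℂ) (ε : ℂ) (hε : ε = 1 ∨ ε = -1) :
    ∀ ℓ : ℕ, 2 ≤ ℓ → ℓ ≤ k - 1 →
      cbinom (-2*(mu - lam - (k : ℂ))) (ℓ+1) ≠ 0 →
      cbinom (-2*(mu - lam - (k : ℂ))) ℓ ≠ 0 →
      ((ℓ : ℂ) + 1) * ((ℓ : ℂ) + 2*(mu - lam - (k : ℂ))) * C3f k lam mu ℓ
        = -((k : ℂ) - ℓ) *
            (ε * (Cm13 k lam mu ε ℓ + Cm13 k lam mu ε ℓ)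
              + ((k : ℂ) - ℓ + 2*lam + 1) * C3f k lam mu (ℓ-1)) := by
  intro ℓ hℓ _ hA _
  have hε2 : ε ^ 2 = 1 := by rcases hε with rfl | rfl <;> norm_num
  have hℓ1 : (ℓ : ℂ) - 1 ≠ 0 := by
    rw [sub_ne_zero]; exact_mod_cast (by omega : ℓ ≠ 1)
  have step := C3f_step k lam mu hℓ (sub_ne_zero_of_cbinom_succ_ne_zero hA)
  rw [Cm13]
  field_simp
  linear_combination (ℓ + 1) * step
    + 2 * ((k : ℂ) - ℓ) * ((k : ℂ) + 2 * lam - ℓ + 1) * C3f k lam mu (ℓ - 1) * hε2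

/-- the even-index recurrence
`(ℓ+1)(ℓ+2(μ-λ-k))C_{2ℓ,3} = -(k-ℓ)(ε(C_{2ℓ-1,1}+C_{2ℓ-1,3}) + (k-ℓ+2λ+1)C_{2ℓ-2,3})`
is satisfied by the closed-form coefficients (assuming nonzero denominators). -/
theorem stmt14 (k : ℕ) (hk : 1 ≤ k) (lam mu : ℂ) (ε : ℂ) (hε : ε = 1 ∨ ε = -1)
    (hres : ∀ j : ℕ, j ≤ 2*k → 2*(mu - lam - (k : ℂ)) ≠ -(j : ℂ)) :
    ∀ ℓ : ℕ, 2 ≤ ℓ → ℓ ≤ k - 1 →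
      cbinom (-2*(mu - lam - (k : ℂ))) (ℓ+1) ≠ 0 →
      cbinom (-2*(mu - lam - (k : ℂ))) ℓ ≠ 0 →
      ((ℓ : ℂ) + 1) * ((ℓ : ℂ) + 2*(mu - lam - (k : ℂ))) * C3f k lam mu ℓ
        = -((k : ℂ) - ℓ) *
            (ε * (Cm13 k lam mu ε ℓ + Cm13 k lam mu ε ℓ)
              + ((k : ℂ) - ℓ + 2*lam + 1) * C3f k lam mu (ℓ-1)) :=
  stmt14_general k lam mu ε hε

end Gr
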